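/- Grouping effect combined bound (Theorems 1 and 2 together): with H = ((A+I)/2)^k X and G_{ip} = h_i c_p as above (c_p = (1+α)/(β−α)(I_d − B^T C_1 B) B_p^T, C_1 = (B B^T + (α+β) I)^{-1}), for any nodes i, j and anchor index p, |G_{ip} − G_{jp}| ≤ (1/2^k)(||(A_i − A_j) P X|| + ||x_i − x_j||) · ||c_p||, where P = Σ_{l=0}^{k−1} C(k, l+1) A^l. In particular, if A_i = A_j and x_i = x_j, then G_{ip} = G_{jp} for all p. -/

import Mathlib

open Matrix Finset

noncomputable def rowNorm {d : ℕ} (v : Fin d → ℝ) : ℝ := Real.sqrt (∑ t, v t ^ 2)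

/-!
Binomially, `(A + I)^k = I + A P`, so `H = 2^{-k} (X + A P X)` and the difference of two rows of
`H` is `2^{-k} ((A_i - A_j) P X + (x_i - x_j))`. Cauchy–Schwarz against `c_p` and the triangle
inequality give the bound, and when `A_i = A_j`, `x_i = x_j` the two rows of `H` coincide.
-/

section RowNorm

variable {d : ℕ}

lemma rowNorm_eq_norm (v : Fin d → ℝ) : rowNorm v = ‖WithLp.toLp 2 v‖ := by
  simp [rowNorm, EuclideanSpace.norm_eq]

lemma rowNorm_add_le (u v : Fin d → ℝ) : rowNorm (u + v) ≤ rowNorm u + rowNorm v := by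
  simpa only [rowNorm_eq_norm, WithLp.toLp_add] using norm_add_le _ _

lemma rowNorm_smul (s : ℝ) (v : Fin d → ℝ) : rowNorm (s • v) = |s| * rowNorm v := by
  rw [rowNorm_eq_norm, rowNorm_eq_norm, WithLp.toLp_smul, norm_smul, Real.norm_eq_abs]

lemma abs_dotProduct_le_rowNorm_mul (u v : Fin d → ℝ) : |u ⬝ᵥ v| ≤ rowNorm u * rowNorm v := by
  rw [rowNorm_eq_norm, rowNorm_eq_norm, dotProduct_comm, ← star_trivial u,
    ← EuclideanSpace.inner_toLp_toLp]
  exact abs_real_inner_le_norm _ _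

end RowNorm

lemma add_one_pow_eq_one_add_mul_sum {𝕜 R : Type*} [CommSemiring 𝕜] [Semiring R] [Algebra 𝕜 R]
    (a : R) (k : ℕ) :
    (a + 1) ^ k = 1 + a * ∑ l ∈ range k, (k.choose (l + 1) : 𝕜) • a ^ l := by
  rw [(Commute.one_right a).add_pow, sum_range_succ', mul_sum]
  simp only [one_pow, mul_one, pow_zero, Nat.choose_zero_right, Nat.cast_one, add_comm (1 : R),
    Nat.cast_smul_eq_nsmul, nsmul_eq_mul]
  congr 1
  refine sum_congr rfl fun l _ => ?_
  rw [pow_succ', mul_assoc, (Nat.cast_commute _ _).eq]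

section GraphFilter

variable {R n ι : Type*} [CommRing R] [Fintype n]

lemma smul_add_one_pow_mul [DecidableEq n] (s : R) (A : Matrix n n R) (X : Matrix n ι R) (k : ℕ) :
    (s • (A + 1)) ^ k * X =
      s ^ k • (X + A * ((∑ l ∈ range k, (k.choose (l + 1) : R) • A ^ l) * X)) := by
  rw [smul_pow, add_one_pow_eq_one_add_mul_sum (𝕜 := R), Matrix.smul_mul, Matrix.add_mul,
    Matrix.one_mul, Matrix.mul_assoc]

lemma smul_add_mul_row_sub (s : R) (A : Matrix n n R) (X Y : Matrix n ι R) (i j : n) :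
    (s • (X + A * Y)) i - (s • (X + A * Y)) j = s • ((A i - A j) ᵥ* Y + (X i - X j)) := by
  rw [sub_vecMul, ← mul_apply_eq_vecMul, ← mul_apply_eq_vecMul]
  ext t
  simp only [Pi.sub_apply, Pi.add_apply, Pi.smul_apply, Matrix.smul_apply, Matrix.add_apply,
    smul_eq_mul]
  ring

end GraphFilter

theorem combined_grouping_effect_general {N d m : ℕ}
    (A : Matrix (Fin N) (Fin N) ℝ) (X : Matrix (Fin N) (Fin d) ℝ)
    (k : ℕ)
    (H : Matrix (Fin N) (Fin d) ℝ) (hH : H = ((2⁻¹ : ℝ) • (A + 1)) ^ k * X)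
    (P : Matrix (Fin N) (Fin N) ℝ)
    (hP : P = ∑ l ∈ Finset.range k, (k.choose (l + 1) : ℝ) • A ^ l)
    (c : Fin m → Fin d → ℝ)
    (G : Fin N → Fin m → ℝ) (hG : ∀ i p, G i p = H i ⬝ᵥ c p) :
    (∀ (i j : Fin N) (p : Fin m),
      |G i p - G j p| ≤ (1 / 2 ^ k) *
        (rowNorm (Matrix.vecMul (A i - A j) (P * X)) +
          rowNorm (fun t => X i t - X j t)) * rowNorm (c p)) ∧
      (∀ i j : Fin N, A i = A j → X i = X j → ∀ p, G i p = G j p) := by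
  have hrow : ∀ i j, H i - H j = ((2 : ℝ) ^ k)⁻¹ • ((A i - A j) ᵥ* (P * X) + (X i - X j)) := by
    intro i j
    rw [hH, smul_add_one_pow_mul, ← hP, smul_add_mul_row_sub, inv_pow]
  have bound : ∀ i j p, |G i p - G j p| ≤ (1 / 2 ^ k) *
      (rowNorm ((A i - A j) ᵥ* (P * X)) + rowNorm (X i - X j)) * rowNorm (c p) := by
    intro i j p
    calc |G i p - G j p| = |(H i - H j) ⬝ᵥ c p| := by rw [hG, hG, sub_dotProduct]
      _ ≤ rowNorm (H i - H j) * rowNorm (c p) := abs_dotProduct_le_rowNorm_mul _ _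
      _ = (1 / 2 ^ k) * rowNorm ((A i - A j) ᵥ* (P * X) + (X i - X j)) * rowNorm (c p) := by
        rw [hrow, rowNorm_smul, abs_of_pos (by positivity), one_div]
      _ ≤ _ := by gcongr; exacts [Real.sqrt_nonneg _, rowNorm_add_le _ _]
  refine ⟨bound, fun i j hA hX p => ?_⟩
  have hH_eq : H i = H j := by
    rw [← sub_eq_zero, hrow, hA, hX, sub_self, sub_self, zero_vecMul, add_zero, smul_zero]
  rw [hG, hG, hH_eq]

theorem combined_grouping_effect {N d m : ℕ}
    (A : Matrix (Fin N) (Fin N) ℝ) (X : Matrix (Fin N) (Fin d) ℝ)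
    (B : Matrix (Fin m) (Fin d) ℝ)
    (α β : ℝ) (hα : 0 < α) (hβ : 0 < β) (hne : β ≠ α)
    (k : ℕ) (hk : 1 ≤ k)
    (H : Matrix (Fin N) (Fin d) ℝ) (hH : H = ((2⁻¹ : ℝ) • (A + 1)) ^ k * X)
    (P : Matrix (Fin N) (Fin N) ℝ)
    (hP : P = ∑ l ∈ Finset.range k, (k.choose (l + 1) : ℝ) • A ^ l)
    (C₁ : Matrix (Fin m) (Fin m) ℝ)
    (hC₁ : C₁ = (B * Bᵀ + (α + β) • (1 : Matrix (Fin m) (Fin m) ℝ))⁻¹)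
    (c : Fin m → Fin d → ℝ)
    (hc : ∀ p, c p = ((1 + α) / (β - α)) •
      Matrix.mulVec ((1 : Matrix (Fin d) (Fin d) ℝ) - Bᵀ * C₁ * B) (B p))
    (G : Fin N → Fin m → ℝ) (hG : ∀ i p, G i p = H i ⬝ᵥ c p) :
    (∀ (i j : Fin N) (p : Fin m),
      |G i p - G j p| ≤ (1 / 2 ^ k) *
        (rowNorm (Matrix.vecMul (A i - A j) (P * X)) +
          rowNorm (fun t => X i t - X j t)) * rowNorm (c p)) ∧
      (∀ i j : Fin N, A i = A j → X i = X j → ∀ p, G i p = G j p) :=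
  combined_grouping_effect_general A X k H hH P hP c G hG
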